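/- arXiv:1708.00051 — 3 statements merged into one kernel-verified Lean document; each statement's English description precedes it below -/
import Mathlib

section
/- Each inverse branch h_m(x) = 1/(m+x) (m ≥ 1) maps the closed complex disk of center 1 and radius 5/4 into the open disk of center 1 and radius 5/4. -/
/-- Each inverse branch `h_m(z) = 1/(m+z)` (`m ≥ 1`) maps the closed disk
`{|z-1| ≤ 5/4}` into the open disk `{|z-1| < 5/4}`. -/
theorem stmt3 (m : ℕ) (hm : 1 ≤ m) (z : ℂ) (hz : ‖z - 1‖ ≤ 5/4) :
    ‖1 / ((m : ℂ) + z) - 1‖ < 5/4 := by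
  have hm' : (1:ℝ) ≤ m := by exact_mod_cast hm
  have hre : |z.re - 1| ≤ 5/4 := by
    have h := Complex.abs_re_le_norm (z - 1)
    simpa using h.trans hz
  have hx : (-1/4 : ℝ) ≤ z.re := by
    have := (abs_le.mp hre).1; linarith
  set w : ℂ := (m : ℂ) + z with hw
  have hwre : (3/4 : ℝ) ≤ w.re := by
    simp only [hw, Complex.add_re, Complex.natCast_re]; linarith
  have hw0 : w ≠ 0 := by
    intro h; rw [h] at hwre; simp at hwre; linarith
  have hwabs : 0 < ‖w‖ := by
    simpa using (norm_pos_iff.mpr hw0)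
  have key : ‖1 - w‖ < 5/4 * ‖w‖ := by
    have h1 : ‖1 - w‖ ^ 2 < (5/4 * ‖w‖) ^ 2 := by
      rw [mul_pow, Complex.sq_norm, Complex.sq_norm, Complex.normSq_apply,
        Complex.normSq_apply, Complex.sub_re, Complex.sub_im, Complex.one_re,
        Complex.one_im]
      nlinarith [sq_nonneg w.im, sq_nonneg (w.re - 3/4)]
    exact lt_of_pow_lt_pow_left₀ 2 (by positivity) h1
  have heq : 1 / w - 1 = (1 - w) / w := by field_simp
  rw [heq, norm_div]
  rw [div_lt_iff₀ hwabs]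
  linarith
end

section
/- If a digit-cost c : ℕ≥1 → ℝ≥0 satisfies c(m) ≤ A·log m + B for all m ≥ 1 (with A, B ≥ 0), then its additive extension to compositions of inverse branches satisfies c(h) ≤ (A/2)·|log|h'(0)|| + B·k for every h = h_{m_1} ∘ ... ∘ h_{m_k}. -/
/-- Inverse branch of the Gauss map: `h_m(x) = 1/(m+x)`. -/
noncomputable def hb (m : ℕ) (x : ℝ) : ℝ := 1 / (m + x)

/-- Composition `h_{m₁} ∘ h_{m₂} ∘ ⋯ ∘ h_{m_k}` of inverse branches. -/
noncomputable def compCF : List ℕ → ℝ → ℝ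
  | [] => id
  | m :: ms => hb m ∘ compCF ms

private noncomputable def sqc (m : ℕ) : ℝ := ((m : ℝ))^2

private lemma compCF_key (ms : List ℕ) (h1 : ∀ m ∈ ms, 1 ≤ m) (x : ℝ)
    (hx : x ∈ Set.Icc (0:ℝ) 1) :
    compCF ms x ∈ Set.Icc (0:ℝ) 1 ∧ ∃ d : ℝ, HasDerivAt (compCF ms) d x ∧ 0 < |d| ∧
      |d| * (ms.map sqc).prod ≤ 1 := by
  induction ms with
  | nil =>
    refine ⟨hx, 1, ?_, by norm_num, by simp⟩
    simpa [compCF] using (hasDerivAt_id x)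
  | cons m t ih =>
    have hm : 1 ≤ m := h1 m (by simp)
    have ht : ∀ n ∈ t, 1 ≤ n := fun n hn => h1 n (by simp [hn])
    obtain ⟨hy, d, hd, hdpos, hdle⟩ := ih ht
    set y := compCF t x with hy_def
    have hm1 : (1:ℝ) ≤ (m:ℝ) := by exact_mod_cast hm
    have hmy : (1:ℝ) ≤ (m:ℝ) + y := by linarith [hy.1]
    have hmy0 : (m:ℝ) + y ≠ 0 := by positivity
    -- range
    have hrange : hb m y ∈ Set.Icc (0:ℝ) 1 := by
      constructor
      · unfold hb; positivity
      · unfold hb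
        rw [div_le_one (by linarith)]
        linarith
    -- derivative of hb m at y
    have hderiv : HasDerivAt (hb m) (-1 / (((m:ℝ) + y)^2)) y := by
      have h1' : HasDerivAt (fun z : ℝ => (m:ℝ) + z) 1 y := by
        simpa using (hasDerivAt_id y).const_add (m:ℝ)
      have h2 := h1'.inv hmy0
      have : (hb m) = fun z : ℝ => ((m:ℝ) + z)⁻¹ := by
        funext z; simp [hb, one_div]
      rw [this]
      exact h2
    have hcomp : HasDerivAt (compCF (m :: t)) (-1 / (((m:ℝ) + y)^2) * d) x := by
      have := hderiv.comp x hd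
      simpa [compCF] using this
    have habs : |(-1 / (((m:ℝ) + y)^2))| = ((((m:ℝ) + y)^2))⁻¹ := by
      rw [abs_div, abs_neg, abs_one, abs_of_nonneg (by positivity), one_div]
    refine ⟨hrange, _, hcomp, ?_, ?_⟩
    · rw [abs_mul, habs]
      have hinv : (0:ℝ) < ((((m:ℝ) + y)^2))⁻¹ := by positivity
      exact mul_pos hinv hdpos
    · rw [abs_mul, habs]
      simp only [List.map_cons, List.prod_cons]
      have hmsq : (m:ℝ)^2 ≤ ((m:ℝ) + y)^2 := by nlinarith [hy.1]
      have hsqc : sqc m = (m:ℝ)^2 := rfl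
      rw [hsqc]
      calc ((((m:ℝ) + y)^2))⁻¹ * |d| * ((m:ℝ)^2 * (t.map sqc).prod)
          = ((m:ℝ)^2 / ((m:ℝ) + y)^2) * (|d| * (t.map sqc).prod) := by ring
        _ ≤ 1 * 1 := by
            have hTnn : (0:ℝ) ≤ (t.map sqc).prod := by
              apply List.prod_nonneg
              intro a ha
              simp only [List.mem_map] at ha
              obtain ⟨n, hn, rfl⟩ := ha
              simp only [sqc]; positivity
            apply mul_le_mul _ hdle (mul_nonneg (abs_nonneg d) hTnn) (by norm_num)
            rw [div_le_one (by positivity)]; exact hmsq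
        _ = 1 := by norm_num

private lemma sum_le (c : ℕ → ℝ) (A B : ℝ) (hA : 0 ≤ A) (hB : 0 ≤ B)
    (hc : ∀ m, 1 ≤ m → c m ≤ A * Real.log m + B)
    (ms : List ℕ) (h1 : ∀ m ∈ ms, 1 ≤ m) :
    (ms.map c).sum ≤ (A / 2) * Real.log (ms.map sqc).prod + B * ms.length := by
  induction ms with
  | nil => simp
  | cons m t ih =>
    have hm : 1 ≤ m := h1 m (by simp)
    have ht : ∀ n ∈ t, 1 ≤ n := fun n hn => h1 n (by simp [hn])
    have hTpos : 0 < (t.map sqc).prod := by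
      apply List.prod_pos
      intro a ha
      simp only [List.mem_map] at ha
      obtain ⟨n, hn, rfl⟩ := ha
      have hn1 : 1 ≤ n := ht n hn
      have : (1:ℝ) ≤ (n:ℝ) := by exact_mod_cast hn1
      simp only [sqc]; positivity
    have ihh := ih ht
    simp only [List.map_cons, List.sum_cons, List.length_cons, List.prod_cons]
    have hm1 : (1:ℝ) ≤ (m:ℝ) := by exact_mod_cast hm
    have hmpos : (0:ℝ) < sqc m := by simp only [sqc]; positivity
    rw [Real.log_mul (ne_of_gt hmpos) (ne_of_gt hTpos)]
    have hlogm2 : Real.log (sqc m) = 2 * Real.log m := by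
      simp only [sqc]
      rw [Real.log_pow]; push_cast; ring
    have hcm := hc m hm
    rw [hlogm2]
    push_cast
    nlinarith [ihh, hcm]

/-- If `c(m) ≤ A log m + B` (with `A, B ≥ 0`), then the additive extension
of `c` to a composition `h` of `k` inverse branches satisfies
`c(h) ≤ (A/2)·|log |h'(0)|| + B·k`. -/
theorem stmt6 (c : ℕ → ℝ) (A B : ℝ) (hA : 0 ≤ A) (hB : 0 ≤ B)
    (hc0 : ∀ m, 1 ≤ m → 0 ≤ c m)
    (hc : ∀ m, 1 ≤ m → c m ≤ A * Real.log m + B)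
    (ms : List ℕ) (h1 : ∀ m ∈ ms, 1 ≤ m) :
    (ms.map c).sum ≤ (A / 2) * |Real.log (|deriv (compCF ms) 0|)| + B * ms.length := by
  obtain ⟨_, d, hd, hdpos, hdle⟩ := compCF_key ms h1 0 (by norm_num)
  rw [hd.deriv]
  set P := (ms.map sqc).prod with hP
  have hPpos : 0 < P := by
    rw [hP]
    apply List.prod_pos
    intro a ha
    simp only [List.mem_map] at ha
    obtain ⟨m, hm, rfl⟩ := ha
    have hm1 : 1 ≤ m := h1 m hm
    have : (1:ℝ) ≤ (m:ℝ) := by exact_mod_cast hm1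
    simp only [sqc]; positivity
  -- log P ≤ |log |d||
  have hPle : P ≤ (|d|)⁻¹ := by
    rw [inv_eq_one_div, le_div_iff₀ hdpos]
    linarith [hdle]
  have hlogP : Real.log P ≤ |Real.log (|d|)| := by
    calc Real.log P ≤ Real.log ((|d|)⁻¹) := Real.log_le_log hPpos hPle
      _ = -Real.log (|d|) := Real.log_inv _
      _ ≤ |Real.log (|d|)| := neg_le_abs _
  have hsum : (ms.map c).sum ≤ (A / 2) * Real.log P + B * ms.length := by
    rw [hP]; exact sum_le c A B hA hB hc ms h1
  calc (ms.map c).sum ≤ (A / 2) * Real.log P + B * ms.length := hsum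
    _ ≤ (A / 2) * |Real.log (|d|)| + B * ms.length := by
        have : (A/2) * Real.log P ≤ (A/2) * |Real.log (|d|)| :=
          mul_le_mul_of_nonneg_left hlogP (by linarith)
        linarith
end

section
/- If a digit-cost c satisfies c(m) ≤ A·log m + B for all m ≥ 1, then there exists d > 0 such that for every composition h of inverse branches of the Gauss map with fixed point x_h, one has exp(c(h)) ≤ |h'(x_h)|^{−d}, where c(h) is the additive extension of c. -/
noncomputable def prodP : List ℕ → ℝ → ℝ
  | [], _ => 1
  | m :: ms, x => compCF (m :: ms) x * prodP ms x

noncomputable def prodQ : List ℕ → ℝ → ℝ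
  | [], _ => 1
  | m :: ms, x => (compCF (m :: ms) x * compCF ms x) * prodQ ms x

lemma compCF_mem : ∀ (ms : List ℕ), (∀ m ∈ ms, 1 ≤ m) → ∀ x : ℝ, 0 ≤ x → x ≤ 1 →
    0 ≤ compCF ms x ∧ compCF ms x ≤ 1
  | [], _, x, hx0, hx1 => ⟨hx0, hx1⟩
  | m :: ms, hd, x, hx0, hx1 => by
    have hm : (1:ℝ) ≤ m := by exact_mod_cast hd m List.mem_cons_self
    obtain ⟨h0, h1⟩ := compCF_mem ms (fun n hn => hd n (List.mem_cons_of_mem _ hn)) x hx0 hx1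
    have hden : (1:ℝ) ≤ (m:ℝ) + compCF ms x := by linarith
    refine ⟨?_, ?_⟩
    · show 0 ≤ 1 / ((m:ℝ) + compCF ms x)
      positivity
    · show 1 / ((m:ℝ) + compCF ms x) ≤ 1
      rw [div_le_one (by linarith)]; linarith

lemma compCF_pos : ∀ (ms : List ℕ), (∀ m ∈ ms, 1 ≤ m) → ∀ x : ℝ, 0 < x → x ≤ 1 →
    0 < compCF ms x
  | [], _, x, hx0, _ => hx0
  | m :: ms, hd, x, hx0, hx1 => by
    have hm : (1:ℝ) ≤ m := by exact_mod_cast hd m List.mem_cons_self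
    have h0 := (compCF_mem ms (fun n hn => hd n (List.mem_cons_of_mem _ hn)) x hx0.le hx1).1
    show 0 < 1 / ((m:ℝ) + compCF ms x)
    positivity

lemma prodP_pos : ∀ (ms : List ℕ), (∀ m ∈ ms, 1 ≤ m) → ∀ x : ℝ, 0 < x → x ≤ 1 →
    0 < prodP ms x
  | [], _, _, _, _ => one_pos
  | m :: ms, hd, x, hx0, hx1 => by
    have h1 := compCF_pos (m :: ms) hd x hx0 hx1
    have h2 := prodP_pos ms (fun n hn => hd n (List.mem_cons_of_mem _ hn)) x hx0 hx1
    exact mul_pos h1 h2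

lemma compCF_hasDeriv : ∀ (ms : List ℕ), (∀ m ∈ ms, 1 ≤ m) → ∀ x : ℝ, 0 ≤ x → x ≤ 1 →
    HasDerivAt (compCF ms) ((-1)^ms.length * (prodP ms x)^2) x
  | [], _, x, _, _ => by simpa [compCF, prodP] using (hasDerivAt_id x)
  | m :: ms, hd, x, hx0, hx1 => by
    have hm : (1:ℝ) ≤ m := by exact_mod_cast hd m List.mem_cons_self
    have hd' : ∀ n ∈ ms, 1 ≤ n := fun n hn => hd n (List.mem_cons_of_mem _ hn)
    have htail := compCF_hasDeriv ms hd' x hx0 hx1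
    have hy0 := (compCF_mem ms hd' x hx0 hx1).1
    set y := compCF ms x with hy
    have hden : (0:ℝ) < (m:ℝ) + y := by linarith
    have hne : ((m:ℝ) + y) ≠ 0 := ne_of_gt hden
    have h0 : HasDerivAt (fun z : ℝ => (m:ℝ) + z) 1 y := by
      simpa using (hasDerivAt_id y).const_add (m:ℝ)
    have hfun : hb m = fun z : ℝ => ((m:ℝ) + z)⁻¹ := by
      funext z; simp [hb, one_div]
    have h1 : HasDerivAt (hb m) (-1 / (((m:ℝ) + y)^2)) y := by
      rw [hfun]
      exact h0.inv hne
    have h2 := h1.comp x htail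
    have heq : compCF (m :: ms) = hb m ∘ compCF ms := rfl
    rw [heq]
    refine h2.congr_deriv ?_
    have : prodP (m :: ms) x = hb m y * prodP ms x := rfl
    rw [this]
    simp only [List.length_cons, hb]
    rw [pow_succ]
    field_simp
    ring

lemma log_prodP_le : ∀ (ms : List ℕ), (∀ m ∈ ms, 1 ≤ m) → ∀ x : ℝ, 0 < x → x ≤ 1 →
    Real.log (prodP ms x) ≤ -((ms.map (fun m : ℕ => Real.log m)).sum)
  | [], _, _, _, _ => by simp [prodP]
  | m :: ms, hd, x, hx0, hx1 => by
    have hm : (1:ℝ) ≤ m := by exact_mod_cast hd m List.mem_cons_self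
    have hd' : ∀ n ∈ ms, 1 ≤ n := fun n hn => hd n (List.mem_cons_of_mem _ hn)
    have hy0 := (compCF_mem ms hd' x hx0.le hx1).1
    have hC : 0 < compCF (m :: ms) x := compCF_pos (m :: ms) hd x hx0 hx1
    have hP : 0 < prodP ms x := prodP_pos ms hd' x hx0 hx1
    have ih := log_prodP_le ms hd' x hx0 hx1
    have hstep : Real.log (compCF (m :: ms) x) ≤ -(Real.log m) := by
      have h1 : compCF (m :: ms) x = ((m:ℝ) + compCF ms x)⁻¹ := by
        show 1 / ((m:ℝ) + compCF ms x) = _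
        rw [one_div]
      rw [h1, Real.log_inv, neg_le_neg_iff]
      exact Real.log_le_log (by linarith) (by linarith)
    have hmul : prodP (m :: ms) x = compCF (m :: ms) x * prodP ms x := rfl
    rw [hmul, Real.log_mul (ne_of_gt hC) (ne_of_gt hP)]
    simp only [List.map_cons, List.sum_cons]
    linarith

lemma prodQ_pos : ∀ (ms : List ℕ), (∀ m ∈ ms, 1 ≤ m) → ∀ x : ℝ, 0 < x → x ≤ 1 →
    0 < prodQ ms x
  | [], _, _, _, _ => one_pos
  | m :: ms, hd, x, hx0, hx1 => by
    have hd' : ∀ n ∈ ms, 1 ≤ n := fun n hn => hd n (List.mem_cons_of_mem _ hn)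
    have h1 := compCF_pos (m :: ms) hd x hx0 hx1
    have h2 := compCF_pos ms hd' x hx0 hx1
    exact mul_pos (mul_pos h1 h2) (prodQ_pos ms hd' x hx0 hx1)

lemma log_prodQ_le : ∀ (ms : List ℕ), (∀ m ∈ ms, 1 ≤ m) → ∀ x : ℝ, 0 < x → x ≤ 1 →
    Real.log (prodQ ms x) ≤ -((ms.length : ℝ) * Real.log 2)
  | [], _, _, _, _ => by simp [prodQ]
  | m :: ms, hd, x, hx0, hx1 => by
    have hm : (1:ℝ) ≤ m := by exact_mod_cast hd m List.mem_cons_self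
    have hd' : ∀ n ∈ ms, 1 ≤ n := fun n hn => hd n (List.mem_cons_of_mem _ hn)
    have hy0 : 0 < compCF ms x := compCF_pos ms hd' x hx0 hx1
    have hy1 := (compCF_mem ms hd' x hx0.le hx1).2
    have hC : 0 < compCF (m :: ms) x := compCF_pos (m :: ms) hd x hx0 hx1
    have hQpos : 0 < prodQ ms x := prodQ_pos ms hd' x hx0 hx1
    have ih := log_prodQ_le ms hd' x hx0 hx1
    have hfac : compCF (m :: ms) x * compCF ms x ≤ 1/2 := by
      have h1 : compCF (m :: ms) x * compCF ms x
          = compCF ms x / ((m:ℝ) + compCF ms x) := by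
        show (1 / ((m:ℝ) + compCF ms x)) * compCF ms x = _
        field_simp
      rw [h1, div_le_iff₀ (by linarith)]
      linarith
    have hmul : prodQ (m :: ms) x = (compCF (m :: ms) x * compCF ms x) * prodQ ms x := rfl
    rw [hmul, Real.log_mul (ne_of_gt (mul_pos hC hy0)) (ne_of_gt hQpos)]
    have hstep : Real.log (compCF (m :: ms) x * compCF ms x) ≤ -(Real.log 2) := by
      have := Real.log_le_log (mul_pos hC hy0) hfac
      rw [show ((1:ℝ)/2) = 2⁻¹ by norm_num, Real.log_inv] at this
      exact this
    simp only [List.length_cons]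
    push_cast
    linarith

lemma prodQ_identity : ∀ (ms : List ℕ) (x : ℝ),
    prodQ ms x * compCF ms x = (prodP ms x)^2 * x
  | [], x => by simp [prodQ, prodP, compCF]
  | m :: ms, x => by
    have ih := prodQ_identity ms x
    have h1 : prodQ (m :: ms) x = (compCF (m :: ms) x * compCF ms x) * prodQ ms x := rfl
    have h2 : prodP (m :: ms) x = compCF (m :: ms) x * prodP ms x := rfl
    rw [h1, h2]
    linear_combination (compCF (m :: ms) x)^2 * ih

/-- For a digit-cost of moderate growth (`c(m) ≤ A log m + B`), there is `d > 0`
such that `exp(c(h)) ≤ |h'(x_h)|^(−d)` for every composition `h` of inverse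
branches with fixed point `x_h`. -/
theorem stmt7 (c : ℕ → ℝ) (A B : ℝ) (hA : 0 ≤ A) (hB : 0 ≤ B)
    (hc0 : ∀ m, 1 ≤ m → 0 ≤ c m)
    (hc : ∀ m, 1 ≤ m → c m ≤ A * Real.log m + B) :
    ∃ d : ℝ, 0 < d ∧ ∀ ms : List ℕ, ms ≠ [] → (∀ m ∈ ms, 1 ≤ m) →
      ∀ x ∈ Set.Icc (0:ℝ) 1, compCF ms x = x →
        Real.exp ((ms.map c).sum) ≤ |deriv (compCF ms) x| ^ (-d) := by
  have hlog2 : (0:ℝ) < Real.log 2 := Real.log_pos (by norm_num)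
  refine ⟨A/2 + B/Real.log 2 + 1, ?_, ?_⟩
  · have h1 : 0 ≤ B / Real.log 2 := div_nonneg hB hlog2.le
    linarith
  intro ms hne hd x hx hfix
  obtain ⟨hx0, hx1⟩ := hx
  -- x is positive
  have hxpos : 0 < x := by
    obtain ⟨m, ms', rfl⟩ := List.exists_cons_of_ne_nil hne
    have hm : (1:ℝ) ≤ m := by exact_mod_cast hd m List.mem_cons_self
    have h0 := (compCF_mem ms' (fun n hn => hd n (List.mem_cons_of_mem _ hn)) x hx0 hx1).1
    rw [← hfix]
    show 0 < 1 / ((m:ℝ) + compCF ms' x)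
    positivity
  have hP : 0 < prodP ms x := prodP_pos ms hd x hxpos hx1
  have hderiv := (compCF_hasDeriv ms hd x hx0 hx1).deriv
  rw [hderiv]
  have habs : |(-1:ℝ)^ms.length * (prodP ms x)^2| = (prodP ms x)^2 := by
    rw [abs_mul, abs_pow, abs_neg, abs_one, one_pow, one_mul, abs_of_nonneg (sq_nonneg _)]
  rw [habs]
  -- prodQ = P^2 at the fixed point
  have hQP : prodQ ms x = (prodP ms x)^2 := by
    have := prodQ_identity ms x
    rw [hfix] at this
    exact mul_right_cancel₀ (ne_of_gt hxpos) this
  have hklog : 2 * Real.log (prodP ms x) ≤ -((ms.length : ℝ) * Real.log 2) := by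
    have h1 := log_prodQ_le ms hd x hxpos hx1
    rw [hQP, Real.log_pow] at h1
    push_cast at h1
    linarith
  set t : ℝ := -(Real.log (prodP ms x)) with ht
  clear_value t
  have hk1 : (1:ℝ) ≤ ms.length := by
    have := List.length_pos_iff.mpr hne
    exact_mod_cast this
  have ht0 : 0 ≤ t := by nlinarith
  -- cost sum bound
  have hsum : ∀ ns : List ℕ, (∀ m ∈ ns, 1 ≤ m) →
      (ns.map c).sum ≤ A * (ns.map (fun m : ℕ => Real.log m)).sum + B * ns.length := by
    intro ns
    induction ns with
    | nil => simp
    | cons n ns ih =>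
      intro hdn
      have h1 := hc n (hdn n List.mem_cons_self)
      have h2 := ih (fun q hq => hdn q (List.mem_cons_of_mem _ hq))
      simp only [List.map_cons, List.sum_cons, List.length_cons]
      push_cast
      linarith
  have hS := hsum ms hd
  have hLsum : (ms.map (fun m : ℕ => Real.log m)).sum ≤ t := by
    have := log_prodP_le ms hd x hxpos hx1
    linarith
  have hAL : A * (ms.map (fun m : ℕ => Real.log m)).sum ≤ A * t :=
    mul_le_mul_of_nonneg_left hLsum hA
  have hBk : B * (ms.length : ℝ) ≤ B * (2*t) / Real.log 2 := by
    rw [le_div_iff₀ hlog2]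
    nlinarith
  -- final comparison
  rw [Real.rpow_def_of_pos (by positivity), Real.log_pow]
  rw [Real.exp_le_exp]
  push_cast
  have hexp : 2 * Real.log (prodP ms x) * -(A/2 + B/Real.log 2 + 1)
      = A * t + B * (2*t) / Real.log 2 + 2*t := by
    rw [ht]; field_simp; ring
  rw [hexp]
  have hfin1 : (List.map c ms).sum ≤ A * t + B * ↑ms.length := by linarith
  have hfin2 : B * (ms.length:ℝ) ≤ B * (2 * t) / Real.log 2 := hBk
  have hfin3 : (0:ℝ) ≤ 2 * t := by linarith
  linarith [hfin1, hfin2, hfin3]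
end
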